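/- arXiv:2109.09417 — 6 statements merged into one kernel-verified Lean document; each statement's English description precedes it below -/
import Mathlib

section
/- Let K be an n×n real symmetric positive definite matrix and T an n×t real matrix with TᵀT = I_t. Then log(TᵀKT) − Tᵀ log(K) T is symmetric positive semi-definite. -/
open Matrix

open Filter intervalIntegral


section scalar

lemma hcont (a : ℝ) (ha : 0 < a) (R : ℝ) (hR : 0 ≤ R) :
    IntervalIntegrable (fun s => 1/(1+s) - 1/(a+s)) MeasureTheory.volume 0 R := by
  apply ContinuousOn.intervalIntegrable
  intro s hs
  rw [Set.uIcc_of_le hR] at hs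
  have h1s : (1:ℝ) + s ≠ 0 := by nlinarith [hs.1]
  have has : a + s ≠ 0 := by nlinarith [hs.1]
  exact ((continuousAt_const.add continuousAt_id).inv₀ h1s).sub
    ((continuousAt_const.add continuousAt_id).inv₀ has) |>.continuousWithinAt |>.congr
    (fun x _ => by simp [one_div]) (by simp [one_div])

lemma logint (a : ℝ) (ha : 0 < a) :
    Tendsto (fun R : ℝ => ∫ s in (0:ℝ)..R, (1/(1+s) - 1/(a+s))) atTop (nhds (Real.log a)) := by
  have key : ∀ R : ℝ, 0 ≤ R → (∫ s in (0:ℝ)..R, (1/(1+s) - 1/(a+s)))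
      = (Real.log (1+R) - Real.log (a+R)) + Real.log a := by
    intro R hR
    have h1 : ∀ s ∈ Set.uIcc (0:ℝ) R, HasDerivAt (fun u => Real.log (1+u) - Real.log (a+u))
        (1/(1+s) - 1/(a+s)) s := by
      intro s hs
      rw [Set.uIcc_of_le hR] at hs
      have hs0 : 0 ≤ s := hs.1
      have h1s : (0:ℝ) < 1 + s := by linarith
      have has : (0:ℝ) < a + s := by linarith
      have d1 : HasDerivAt (fun u : ℝ => Real.log (1+u)) (1/(1+s)) s := by
        have := (Real.hasDerivAt_log h1s.ne').comp s ((hasDerivAt_id s).const_add 1)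
        simpa [one_div, Function.comp_def] using this
      have d2 : HasDerivAt (fun u : ℝ => Real.log (a+u)) (1/(a+s)) s := by
        have := (Real.hasDerivAt_log has.ne').comp s ((hasDerivAt_id s).const_add a)
        simpa [one_div, Function.comp_def] using this
      exact d1.sub d2
    rw [integral_eq_sub_of_hasDerivAt h1 (hcont a ha R hR)]
    simp [Real.log_one]
  have h0 : Tendsto (fun R : ℝ => (1-a)/(a+R)) atTop (nhds 0) :=
    tendsto_const_nhds.div_atTop (tendsto_atTop_add_const_left _ a tendsto_id)
  have h1 : Tendsto (fun R : ℝ => Real.log (1+R) - Real.log (a+R)) atTop (nhds 0) := by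
    have h2 : Tendsto (fun R : ℝ => (1+R)/(a+R)) atTop (nhds 1) := by
      have := h0.const_add (1:ℝ)
      rw [add_zero] at this
      apply this.congr'
      filter_upwards [eventually_gt_atTop 0] with R hR
      have : a + R ≠ 0 := by positivity
      field_simp
      ring
    have hlog := (Real.continuousAt_log one_ne_zero).tendsto.comp h2
    rw [Real.log_one] at hlog
    apply hlog.congr'
    filter_upwards [eventually_gt_atTop 0] with R hR
    have h1R : (0:ℝ) < 1 + R := by linarith
    have haR : (0:ℝ) < a + R := by linarith
    simp [Function.comp, Real.log_div h1R.ne' haR.ne']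
  have := h1.add_const (Real.log a)
  rw [zero_add] at this
  apply this.congr'
  filter_upwards [eventually_ge_atTop 0] with R hR
  exact (key R hR).symm

end scalar

section spectral

variable {n : ℕ} (A : Matrix (Fin n) (Fin n) ℝ) (hA : A.IsHermitian)

noncomputable def Df (f : ℝ → ℝ) : Matrix (Fin n) (Fin n) ℝ :=
  (hA.eigenvectorUnitary : Matrix (Fin n) (Fin n) ℝ) *
    Matrix.diagonal (f ∘ hA.eigenvalues) *
    (star hA.eigenvectorUnitary : Matrix (Fin n) (Fin n) ℝ)

lemma star_mul_selfU : (star hA.eigenvectorUnitary : Matrix (Fin n) (Fin n) ℝ) *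
    (hA.eigenvectorUnitary : Matrix (Fin n) (Fin n) ℝ) = 1 := by
  simpa [Unitary.coe_star] using congrArg (Subtype.val) (star_mul_self_of_mem hA.eigenvectorUnitary.2)

lemma mul_star_selfU : (hA.eigenvectorUnitary : Matrix (Fin n) (Fin n) ℝ) *
    (star hA.eigenvectorUnitary : Matrix (Fin n) (Fin n) ℝ) = 1 := by
  simpa [Unitary.coe_star] using congrArg (Subtype.val) (mul_star_self_of_mem hA.eigenvectorUnitary.2)

lemma Df_mul (f g : ℝ → ℝ) : Df A hA f * Df A hA g = Df A hA (f * g) := by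
  unfold Df
  rw [mul_assoc, mul_assoc, ← mul_assoc (star hA.eigenvectorUnitary : Matrix (Fin n) (Fin n) ℝ),
    ← mul_assoc (star hA.eigenvectorUnitary : Matrix (Fin n) (Fin n) ℝ),
    star_mul_selfU, one_mul, ← mul_assoc, ← mul_assoc, mul_assoc _ _ (diagonal _),
    diagonal_mul_diagonal]
  rfl

lemma Df_congr {f g : ℝ → ℝ} (h : ∀ i, f (hA.eigenvalues i) = g (hA.eigenvalues i)) :
    Df A hA f = Df A hA g := by
  unfold Df
  have : f ∘ hA.eigenvalues = g ∘ hA.eigenvalues := funext h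
  rw [this]

lemma Df_one : Df A hA (fun _ => 1) = 1 := by
  unfold Df
  have h : (fun _ => (1:ℝ)) ∘ hA.eigenvalues = fun _ => 1 := rfl
  rw [h, diagonal_one, mul_one, mul_star_selfU]

lemma Df_spec : A = Df A hA id := by
  have := hA.spectral_theorem
  rw [Unitary.conjStarAlgAut_apply] at this
  unfold Df
  exact this

lemma Df_smul_one (s : ℝ) : s • (1 : Matrix (Fin n) (Fin n) ℝ) = Df A hA (fun _ => s) := by
  unfold Df
  have h : (fun _ => s) ∘ hA.eigenvalues = fun _ => s := rfl
  have h2 : diagonal (fun _ : Fin n => s) = s • (1 : Matrix (Fin n) (Fin n) ℝ) := by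
    ext i j
    by_cases hij : i = j <;> simp [diagonal_apply, one_apply, hij]
  rw [h, h2, Matrix.mul_smul, Matrix.smul_mul, mul_one, mul_star_selfU]

lemma Df_add (f g : ℝ → ℝ) : Df A hA f + Df A hA g = Df A hA (f + g) := by
  unfold Df
  rw [← add_mul, ← Matrix.mul_add, diagonal_add]
  rfl

lemma Df_isHermitian (f : ℝ → ℝ) : (Df A hA f).IsHermitian := by
  unfold Df IsHermitian
  have hD : (diagonal (f ∘ hA.eigenvalues))ᴴ = diagonal (f ∘ hA.eigenvalues) := by
    simp [diagonal_conjTranspose, Pi.star_def]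
  rw [conjTranspose_mul, conjTranspose_mul, hD,
    ← Matrix.star_eq_conjTranspose, ← Matrix.star_eq_conjTranspose, star_star, mul_assoc]

lemma quadform (f : ℝ → ℝ) (x : Fin n → ℝ) :
    x ⬝ᵥ (Df A hA f) *ᵥ x =
      ∑ i, f (hA.eigenvalues i) * ((star hA.eigenvectorUnitary : Matrix (Fin n) (Fin n) ℝ) *ᵥ x) i ^ 2 := by
  set U := (hA.eigenvectorUnitary : Matrix (Fin n) (Fin n) ℝ)
  set c := (star U) *ᵥ x with hc
  have hstar : star U = Uᵀ := by
    rw [Matrix.star_eq_conjTranspose, conjTranspose_eq_transpose_of_trivial]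
  have h1 : (Df A hA f) *ᵥ x = U *ᵥ (diagonal (f ∘ hA.eigenvalues) *ᵥ c) := by
    unfold Df
    rw [← mulVec_mulVec, ← mulVec_mulVec]
  have h2 : x ᵥ* U = c := by
    rw [hc, hstar, ← transpose_transpose U, vecMul_transpose, transpose_transpose]
  rw [h1, dotProduct_mulVec, h2]
  simp only [dotProduct, mulVec_diagonal]
  exact Finset.sum_congr rfl fun i _ => by simp [Function.comp]; ring

end spectral

section csineq

lemma psd_quad {n : ℕ} {M : Matrix (Fin n) (Fin n) ℝ} (hM : M.PosSemidef) (x : Fin n → ℝ) :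
    0 ≤ x ⬝ᵥ M *ᵥ x := by simpa using hM.dotProduct_mulVec_nonneg x

lemma symm_dot {n : ℕ} {M : Matrix (Fin n) (Fin n) ℝ} (hM : M.IsHermitian)
    (p q : Fin n → ℝ) : p ⬝ᵥ M *ᵥ q = q ⬝ᵥ M *ᵥ p := by
  have hMt : Mᵀ = M := by
    rw [← conjTranspose_eq_transpose_of_trivial]; exact hM
  rw [dotProduct_mulVec, ← hMt, vecMul_transpose, hMt, dotProduct_comm]

lemma compress_quad {n t : ℕ} (T : Matrix (Fin n) (Fin t) ℝ) (A : Matrix (Fin n) (Fin n) ℝ)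
    (u : Fin t → ℝ) : (T *ᵥ u) ⬝ᵥ (A *ᵥ (T *ᵥ u)) = u ⬝ᵥ ((Tᵀ * A * T) *ᵥ u) := by
  rw [mulVec_mulVec, dotProduct_mulVec, ← vecMul_transpose, vecMul_vecMul, ← Matrix.mul_assoc,
    ← dotProduct_mulVec]

lemma cs {n : ℕ} {M : Matrix (Fin n) (Fin n) ℝ} (hM : M.PosSemidef) (p q : Fin n → ℝ) :
    (p ⬝ᵥ M *ᵥ q)^2 ≤ (p ⬝ᵥ M *ᵥ p) * (q ⬝ᵥ M *ᵥ q) := by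
  have hsym := symm_dot hM.1 q p
  have key : ∀ s : ℝ, 0 ≤ (q ⬝ᵥ M *ᵥ q) * (s * s) + (2 * (p ⬝ᵥ M *ᵥ q)) * s + (p ⬝ᵥ M *ᵥ p) := by
    intro s
    have h := psd_quad hM (p + s • q)
    simp only [mulVec_add, mulVec_smul, dotProduct_add, add_dotProduct, smul_dotProduct,
      dotProduct_smul, smul_eq_mul] at h
    rw [hsym] at h
    ring_nf at h ⊢
    linarith
  have hd := discrim_le_zero key
  unfold discrim at hd
  nlinarith [hd]

lemma key_ineq {n t : ℕ} (T : Matrix (Fin n) (Fin t) ℝ) (hT : Tᵀ * T = 1)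
    (A M : Matrix (Fin n) (Fin n) ℝ) (N : Matrix (Fin t) (Fin t) ℝ)
    (hM : M.PosSemidef) (hMA : M * A = 1) (hA : A.IsHermitian)
    (hN : N.PosSemidef) (hNB : N * (Tᵀ * A * T) = 1) (x : Fin t → ℝ) :
    x ⬝ᵥ N *ᵥ x ≤ (T *ᵥ x) ⬝ᵥ M *ᵥ (T *ᵥ x) := by
  set p := T *ᵥ x with hp
  set w := T *ᵥ (N *ᵥ x) with hw
  set q := A *ᵥ w with hq
  have hTdot : ∀ y z : Fin t → ℝ, (T *ᵥ y) ⬝ᵥ (T *ᵥ z) = y ⬝ᵥ z := by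
    intro y z
    rw [dotProduct_mulVec, ← vecMul_transpose, vecMul_vecMul, hT, vecMul_one]
  have hMq : M *ᵥ q = w := by
    rw [hq, mulVec_mulVec, hMA, one_mulVec]
  have hBN : (Tᵀ * A * T) * N = 1 := by
    have hAt : Aᵀ = A := by rw [← conjTranspose_eq_transpose_of_trivial]; exact hA
    have hBh : (Tᵀ * A * T)ᵀ = Tᵀ * A * T := by
      rw [transpose_mul, transpose_mul, transpose_transpose, hAt, ← Matrix.mul_assoc]
    have hNt : Nᵀ = N := by
      rw [← conjTranspose_eq_transpose_of_trivial]; exact hN.1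
    calc (Tᵀ * A * T) * N = ((Tᵀ * A * T) * N)ᵀᵀ := by rw [transpose_transpose]
      _ = (Nᵀ * (Tᵀ * A * T)ᵀ)ᵀ := by rw [transpose_mul]
      _ = 1 := by rw [hNt, hBh, hNB, transpose_one]
  have hpMq : p ⬝ᵥ M *ᵥ q = x ⬝ᵥ N *ᵥ x := by
    rw [hMq, hp, hw, hTdot]
  have hqMq : q ⬝ᵥ M *ᵥ q = x ⬝ᵥ N *ᵥ x := by
    rw [hMq, hq, dotProduct_comm, hw, compress_quad, mulVec_mulVec, hBN, one_mulVec,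
      dotProduct_comm]
  have hcs := cs hM p q
  rw [hpMq, hqMq] at hcs
  have hnu : 0 ≤ x ⬝ᵥ N *ᵥ x := psd_quad hN x
  rcases eq_or_lt_of_le hnu with h0 | h0
  · rw [← h0]; exact psd_quad hM p
  · nlinarith [hcs]

end csineq

/-- Matrix logarithm of a real symmetric matrix, defined via the spectral decomposition. -/
noncomputable def mlog {n : ℕ} (A : Matrix (Fin n) (Fin n) ℝ) (hA : A.IsHermitian) :
    Matrix (Fin n) (Fin n) ℝ :=
  (hA.eigenvectorUnitary : Matrix (Fin n) (Fin n) ℝ) *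
    Matrix.diagonal (Real.log ∘ hA.eigenvalues) *
    (star hA.eigenvectorUnitary : Matrix (Fin n) (Fin n) ℝ)

lemma mlog_eq_Df {n : ℕ} (A : Matrix (Fin n) (Fin n) ℝ) (hA : A.IsHermitian) :
    mlog A hA = Df A hA Real.log := rfl

lemma Tdot {n t : ℕ} (T : Matrix (Fin n) (Fin t) ℝ) (hT : Tᵀ * T = 1)
    (y z : Fin t → ℝ) : (T *ᵥ y) ⬝ᵥ (T *ᵥ z) = y ⬝ᵥ z := by
  rw [dotProduct_mulVec, ← vecMul_transpose, vecMul_vecMul, hT, vecMul_one]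

lemma herm_compress {n t : ℕ} (T : Matrix (Fin n) (Fin t) ℝ) {L : Matrix (Fin n) (Fin n) ℝ}
    (hL : L.IsHermitian) : (Tᵀ * L * T).IsHermitian := by
  have hLt : Lᵀ = L := by rw [← conjTranspose_eq_transpose_of_trivial]; exact hL
  unfold IsHermitian
  rw [conjTranspose_eq_transpose_of_trivial, transpose_mul, transpose_mul, transpose_transpose,
    hLt, ← Matrix.mul_assoc]

lemma Df_psd {n : ℕ} (A : Matrix (Fin n) (Fin n) ℝ) (hA : A.IsHermitian) (f : ℝ → ℝ)
    (hf : ∀ i, 0 ≤ f (hA.eigenvalues i)) : (Df A hA f).PosSemidef := by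
  refine PosSemidef.of_dotProduct_mulVec_nonneg (Df_isHermitian A hA f) fun x => ?_
  rw [star_trivial, quadform]
  exact Finset.sum_nonneg fun i _ => mul_nonneg (hf i) (sq_nonneg _)

lemma shift_eq_Df {n : ℕ} (A : Matrix (Fin n) (Fin n) ℝ) (hA : A.IsHermitian) (s : ℝ) :
    A + s • 1 = Df A hA (id + fun _ => s) := by
  rw [← Df_add]
  exact congrArg₂ HAdd.hAdd (Df_spec A hA) (Df_smul_one A hA s)

lemma Df_inv_mul {n : ℕ} (A : Matrix (Fin n) (Fin n) ℝ) (hA : A.IsHermitian)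
    (hpos : ∀ i, 0 < hA.eigenvalues i) (s : ℝ) (hs : 0 ≤ s) :
    Df A hA (fun l => (l + s)⁻¹) * (A + s • 1) = 1 := by
  rw [shift_eq_Df A hA s, Df_mul]
  rw [Df_congr A hA (g := fun _ => 1) ?_, Df_one]
  intro i
  have : hA.eigenvalues i + s ≠ 0 := by have := hpos i; positivity
  simp [this]


theorem stmt_0 {n t : ℕ} (K : Matrix (Fin n) (Fin n) ℝ) (hK : K.PosDef)
    (T : Matrix (Fin n) (Fin t) ℝ) (hT : Tᵀ * T = 1)
    (h1 : (Tᵀ * K * T).IsHermitian) :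
    (mlog (Tᵀ * K * T) h1 - Tᵀ * mlog K hK.1 * T).PosSemidef := by
  have hB : (Tᵀ * K * T).PosDef := by
    refine PosDef.of_dotProduct_mulVec_pos h1 fun x hx => ?_
    rw [star_trivial, ← compress_quad]
    have hTx : T *ᵥ x ≠ 0 := by
      intro h
      apply hx
      have hx0 : x = Tᵀ *ᵥ (T *ᵥ x) := by rw [mulVec_mulVec, hT, one_mulVec]
      rw [h, mulVec_zero] at hx0
      exact hx0
    simpa using hK.dotProduct_mulVec_pos hTx
  have hlam : ∀ i, 0 < hK.1.eigenvalues i := hK.eigenvalues_pos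
  have hmu : ∀ j, 0 < h1.eigenvalues j := hB.eigenvalues_pos
  refine PosSemidef.of_dotProduct_mulVec_nonneg ?_ ?_
  · exact ((Df_isHermitian _ h1 Real.log).sub (herm_compress T (Df_isHermitian K hK.1 Real.log)))
  intro x
  rw [star_trivial, sub_mulVec, dotProduct_sub, sub_nonneg, mlog_eq_Df, mlog_eq_Df,
    ← compress_quad, quadform, quadform]
  set c := (star hK.1.eigenvectorUnitary : Matrix (Fin n) (Fin n) ℝ) *ᵥ (T *ᵥ x) with hc
  set d := (star h1.eigenvectorUnitary : Matrix (Fin t) (Fin t) ℝ) *ᵥ x with hd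
  -- sum of squares equality
  have hsum : ∑ i, c i ^ 2 = ∑ j, d j ^ 2 := by
    have e1 : ∑ i, c i ^ 2 = (T *ᵥ x) ⬝ᵥ (T *ᵥ x) := by
      have := quadform K hK.1 (fun _ => 1) (T *ᵥ x)
      rw [Df_one, one_mulVec] at this
      simp only [one_mul] at this
      exact this.symm
    have e2 : ∑ j, d j ^ 2 = x ⬝ᵥ x := by
      have := quadform (Tᵀ * K * T) h1 (fun _ => 1) x
      rw [Df_one, one_mulVec] at this
      simp only [one_mul] at this
      exact this.symm
    rw [e1, e2, Tdot T hT]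
  -- pointwise resolvent inequality
  have hG : ∀ s : ℝ, 0 ≤ s →
      ∑ j, d j ^ 2 * (h1.eigenvalues j + s)⁻¹ ≤ ∑ i, c i ^ 2 * (hK.1.eigenvalues i + s)⁻¹ := by
    intro s hs
    have hMpsd : (Df K hK.1 (fun l => (l + s)⁻¹)).PosSemidef :=
      Df_psd K hK.1 _ fun i => by have := hlam i; positivity
    have hNpsd : (Df (Tᵀ * K * T) h1 (fun l => (l + s)⁻¹)).PosSemidef :=
      Df_psd _ h1 _ fun j => by have := hmu j; positivity
    have hMA : (Df K hK.1 (fun l => (l + s)⁻¹)) * (K + s • 1) = 1 :=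
      Df_inv_mul K hK.1 hlam s hs
    have hshift : Tᵀ * (K + s • 1) * T = (Tᵀ * K * T) + s • 1 := by
      rw [Matrix.mul_add, Matrix.add_mul, Matrix.mul_smul, Matrix.smul_mul, Matrix.mul_one, hT]
    have hNB : (Df (Tᵀ * K * T) h1 (fun l => (l + s)⁻¹)) * (Tᵀ * (K + s • 1) * T) = 1 := by
      rw [hshift]
      exact Df_inv_mul _ h1 hmu s hs
    have hAh : (K + s • 1).IsHermitian := by
      rw [shift_eq_Df K hK.1 s]
      exact Df_isHermitian _ _ _
    have := key_ineq T hT (K + s • 1) (Df K hK.1 (fun l => (l + s)⁻¹))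
      (Df (Tᵀ * K * T) h1 (fun l => (l + s)⁻¹)) hMpsd hMA hAh hNpsd hNB x
    rw [quadform, quadform] at this
    calc ∑ j, d j ^ 2 * (h1.eigenvalues j + s)⁻¹
        = ∑ j, (h1.eigenvalues j + s)⁻¹ * d j ^ 2 := by
          exact Finset.sum_congr rfl fun j _ => by ring
      _ ≤ ∑ i, (hK.1.eigenvalues i + s)⁻¹ * c i ^ 2 := this
      _ = ∑ i, c i ^ 2 * (hK.1.eigenvalues i + s)⁻¹ := by
          exact Finset.sum_congr rfl fun i _ => by ring
  -- the integral representation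
  set G : ℝ → ℝ := fun s =>
    (∑ j, d j ^ 2 * (1/(1+s) - 1/(h1.eigenvalues j + s))) -
    (∑ i, c i ^ 2 * (1/(1+s) - 1/(hK.1.eigenvalues i + s))) with hGdef
  have hInt : ∀ R : ℝ, 0 ≤ R → (∫ s in (0:ℝ)..R, G s)
      = (∑ j, d j ^ 2 * ∫ s in (0:ℝ)..R, (1/(1+s) - 1/(h1.eigenvalues j + s))) -
        (∑ i, c i ^ 2 * ∫ s in (0:ℝ)..R, (1/(1+s) - 1/(hK.1.eigenvalues i + s))) := by
    intro R hR
    have hi1 : ∀ j : Fin t, IntervalIntegrable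
        (fun s => d j ^ 2 * (1/(1+s) - 1/(h1.eigenvalues j + s))) MeasureTheory.volume 0 R :=
      fun j => (hcont _ (hmu j) R hR).const_mul _
    have hi2 : ∀ i : Fin n, IntervalIntegrable
        (fun s => c i ^ 2 * (1/(1+s) - 1/(hK.1.eigenvalues i + s))) MeasureTheory.volume 0 R :=
      fun i => (hcont _ (hlam i) R hR).const_mul _
    have hif : IntervalIntegrable
        (fun s => ∑ j, d j ^ 2 * (1/(1+s) - 1/(h1.eigenvalues j + s)))
        MeasureTheory.volume 0 R := by
      have h := IntervalIntegrable.sum (μ := MeasureTheory.volume) Finset.univ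
        (fun j (_ : j ∈ Finset.univ) => hi1 j)
      convert h using 1
      · rfl
      funext u
      simp [Finset.sum_apply]
    have hig : IntervalIntegrable
        (fun s => ∑ i, c i ^ 2 * (1/(1+s) - 1/(hK.1.eigenvalues i + s)))
        MeasureTheory.volume 0 R := by
      have h := IntervalIntegrable.sum (μ := MeasureTheory.volume) Finset.univ
        (fun i (_ : i ∈ Finset.univ) => hi2 i)
      convert h using 1
      · rfl
      funext u
      simp [Finset.sum_apply]
    rw [hGdef]
    rw [integral_sub hif hig,
      integral_finset_sum (fun j _ => hi1 j), integral_finset_sum (fun i _ => hi2 i)]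
    congr 1
    · exact Finset.sum_congr rfl fun j _ => (integral_const_mul _ _)
    · exact Finset.sum_congr rfl fun i _ => (integral_const_mul _ _)
  have hGnonneg : ∀ s : ℝ, 0 ≤ s → 0 ≤ G s := by
    intro s hs
    have h1s : (0:ℝ) < 1 + s := by linarith
    have e1 : ∑ j, d j ^ 2 * (1/(1+s) - 1/(h1.eigenvalues j + s))
        = (∑ j, d j ^ 2) * (1/(1+s)) - ∑ j, d j ^ 2 * (h1.eigenvalues j + s)⁻¹ := by
      rw [Finset.sum_mul]
      rw [← Finset.sum_sub_distrib]
      exact Finset.sum_congr rfl fun j _ => by ring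
    have e2 : ∑ i, c i ^ 2 * (1/(1+s) - 1/(hK.1.eigenvalues i + s))
        = (∑ i, c i ^ 2) * (1/(1+s)) - ∑ i, c i ^ 2 * (hK.1.eigenvalues i + s)⁻¹ := by
      rw [Finset.sum_mul]
      rw [← Finset.sum_sub_distrib]
      exact Finset.sum_congr rfl fun i _ => by ring
    rw [hGdef]
    simp only [e1, e2, hsum]
    have := hG s hs
    linarith
  -- limits
  have hTend : Tendsto (fun R => ∫ s in (0:ℝ)..R, G s) atTop
      (nhds ((∑ j, d j ^ 2 * Real.log (h1.eigenvalues j)) -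
             (∑ i, c i ^ 2 * Real.log (hK.1.eigenvalues i)))) := by
    have t1 : Tendsto (fun R => ∑ j, d j ^ 2 * ∫ s in (0:ℝ)..R,
        (1/(1+s) - 1/(h1.eigenvalues j + s))) atTop
        (nhds (∑ j, d j ^ 2 * Real.log (h1.eigenvalues j))) :=
      tendsto_finset_sum _ fun j _ => (logint _ (hmu j)).const_mul _
    have t2 : Tendsto (fun R => ∑ i, c i ^ 2 * ∫ s in (0:ℝ)..R,
        (1/(1+s) - 1/(hK.1.eigenvalues i + s))) atTop
        (nhds (∑ i, c i ^ 2 * Real.log (hK.1.eigenvalues i))) :=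
      tendsto_finset_sum _ fun i _ => (logint _ (hlam i)).const_mul _
    apply (t1.sub t2).congr'
    filter_upwards [eventually_ge_atTop 0] with R hR
    exact (hInt R hR).symm
  have hfinal : 0 ≤ (∑ j, d j ^ 2 * Real.log (h1.eigenvalues j)) -
      (∑ i, c i ^ 2 * Real.log (hK.1.eigenvalues i)) := by
    refine ge_of_tendsto hTend ?_
    filter_upwards [eventually_ge_atTop 0] with R hR
    exact intervalIntegral.integral_nonneg hR fun u hu => hGnonneg u hu.1
  calc ∑ i, Real.log (hK.1.eigenvalues i) * c i ^ 2
      = ∑ i, c i ^ 2 * Real.log (hK.1.eigenvalues i) :=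
        Finset.sum_congr rfl fun i _ => by ring
    _ ≤ ∑ j, d j ^ 2 * Real.log (h1.eigenvalues j) := by linarith
    _ = ∑ j, Real.log (h1.eigenvalues j) * d j ^ 2 :=
        Finset.sum_congr rfl fun j _ => by ring
end

section
/- Let A be a real symmetric positive definite n×n matrix. Then log(A) = ∫₀^∞ ( (1/(1+s)) I − (A + s I)⁻¹ ) ds, where the integral converges entrywise. -/
open Matrix MeasureTheory Set Filter




lemma scalar_tendsto (lam : ℝ) (hl : 0 < lam) :
    Tendsto (fun s => Real.log (1+s) - Real.log (lam+s)) atTop (nhds 0) := by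
  have h1 : Tendsto (fun s : ℝ => (1+s)/(lam+s)) atTop (nhds 1) := by
    have hn : Tendsto (fun s : ℝ => s⁻¹ + 1) atTop (nhds 1) := by
      simpa using tendsto_inv_atTop_zero.add (tendsto_const_nhds (x := (1:ℝ)))
    have hd : Tendsto (fun s : ℝ => lam * s⁻¹ + 1) atTop (nhds 1) := by
      have : Tendsto (fun s : ℝ => lam * s⁻¹ + 1) atTop (nhds (lam * 0 + 1)) :=
        (tendsto_inv_atTop_zero.const_mul lam).add tendsto_const_nhds
      simpa using this
    have h := hn.div hd one_ne_zero
    rw [div_one] at h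
    refine h.congr' ?_
    filter_upwards [eventually_gt_atTop 0] with s hs
    rw [Pi.div_apply]
    field_simp
  have := (Real.continuousAt_log one_ne_zero).tendsto.comp h1
  simp only [Real.log_one] at this
  refine this.congr' ?_
  filter_upwards [eventually_gt_atTop 0] with s hs
  rw [Function.comp_apply, Real.log_div (by positivity) (by positivity)]

lemma scalar_deriv (lam : ℝ) (hl : 0 < lam) :
    ∀ x ∈ Ici (0:ℝ), HasDerivAt (fun s => Real.log (1+s) - Real.log (lam+s))
      (1/(1+x) - (lam+x)⁻¹) x := by
  intro x hx
  have hx0 : (0:ℝ) ≤ x := hx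
  have h1 : HasDerivAt (fun s : ℝ => Real.log (1+s)) (1/(1+x)) x := by
    have := (Real.hasDerivAt_log (by positivity : (1+x) ≠ 0)).comp x
      ((hasDerivAt_id x).const_add 1)
    simpa [one_div, Function.comp_def] using this
  have h2 : HasDerivAt (fun s : ℝ => Real.log (lam+s)) ((lam+x)⁻¹) x := by
    have := (Real.hasDerivAt_log (by positivity : (lam+x) ≠ 0)).comp x
      ((hasDerivAt_id x).const_add lam)
    simpa [Function.comp_def] using this
  exact h1.sub h2

lemma scalar_main (lam : ℝ) (hl : 0 < lam) :
    IntegrableOn (fun s => 1/(1+s) - (lam + s)⁻¹) (Ioi 0) ∧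
    ∫ s in Ioi (0:ℝ), (1/(1+s) - (lam + s)⁻¹) = Real.log lam := by
  have hderiv := scalar_deriv lam hl
  have htend := scalar_tendsto lam hl
  have hF0 : Real.log (1+0) - Real.log (lam+0) = - Real.log lam := by simp
  rcases le_or_gt 1 lam with h | h
  · have hpos : ∀ x ∈ Ioi (0:ℝ), 0 ≤ 1/(1+x) - (lam+x)⁻¹ := by
      intro x hx
      have hx0 : (0:ℝ) < x := hx
      have : (lam+x)⁻¹ ≤ (1+x)⁻¹ := by
        apply inv_anti₀ (by positivity); linarith
      simp only [one_div]; linarith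
    refine ⟨integrableOn_Ioi_deriv_of_nonneg' hderiv hpos htend, ?_⟩
    rw [integral_Ioi_of_hasDerivAt_of_nonneg' hderiv hpos htend]
    simp
  · have hneg : ∀ x ∈ Ioi (0:ℝ), 1/(1+x) - (lam+x)⁻¹ ≤ 0 := by
      intro x hx
      have hx0 : (0:ℝ) < x := hx
      have : (1+x)⁻¹ ≤ (lam+x)⁻¹ := by
        apply inv_anti₀ (by positivity); linarith
      simp only [one_div]; linarith
    refine ⟨integrableOn_Ioi_deriv_of_nonpos' hderiv hneg htend, ?_⟩
    rw [integral_Ioi_of_hasDerivAt_of_nonpos' hderiv hneg htend]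
    simp



variable {n : ℕ}

lemma key_decomp (A : Matrix (Fin n) (Fin n) ℝ) (hA : A.PosDef) (s : ℝ) (hs : 0 < s) :
    (A + s • (1 : Matrix (Fin n) (Fin n) ℝ))⁻¹ =
      (hA.1.eigenvectorUnitary : Matrix (Fin n) (Fin n) ℝ) *
        diagonal (fun k => (hA.1.eigenvalues k + s)⁻¹) *
        (star hA.1.eigenvectorUnitary : Matrix (Fin n) (Fin n) ℝ) := by
  set U : Matrix (Fin n) (Fin n) ℝ := (hA.1.eigenvectorUnitary : Matrix (Fin n) (Fin n) ℝ)
  have hUU : U * star U = 1 := Matrix.mem_unitaryGroup_iff.mp hA.1.eigenvectorUnitary.2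
  have hUU' : star U * U = 1 := Matrix.mem_unitaryGroup_iff'.mp hA.1.eigenvectorUnitary.2
  have hspec : A = U * diagonal (fun k => hA.1.eigenvalues k) * star U := by
    have := hA.1.spectral_theorem
    simpa [Function.comp] using this
  have hAd : A + s • (1 : Matrix (Fin n) (Fin n) ℝ)
      = U * diagonal (fun k => hA.1.eigenvalues k + s) * star U := by
    conv_lhs => rw [hspec]
    have h1 : s • (1 : Matrix (Fin n) (Fin n) ℝ) = U * (s • 1) * star U := by
      rw [Matrix.mul_smul, Matrix.smul_mul, mul_one, hUU]
    rw [h1, ← Matrix.add_mul, ← Matrix.mul_add]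
    congr 1
    congr 1
    rw [smul_one_eq_diagonal, diagonal_add]
  rw [hAd]
  apply Matrix.inv_eq_right_inv
  calc U * diagonal (fun k => hA.1.eigenvalues k + s) * star U *
        (U * diagonal (fun k => (hA.1.eigenvalues k + s)⁻¹) * star U)
      = U * (diagonal (fun k => hA.1.eigenvalues k + s) *
          diagonal (fun k => (hA.1.eigenvalues k + s)⁻¹)) * star U := by
        rw [← Matrix.mul_assoc, ← Matrix.mul_assoc, Matrix.mul_assoc _ (star U) U, hUU', mul_one,
          Matrix.mul_assoc U]
    _ = 1 := by
        rw [diagonal_mul_diagonal]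
        have : (fun k => (hA.1.eigenvalues k + s) * (hA.1.eigenvalues k + s)⁻¹)
            = fun _ => (1:ℝ) := by
          funext k
          exact mul_inv_cancel₀ (by have := hA.eigenvalues_pos k; positivity)
        rw [this, diagonal_one, mul_one, hUU]

lemma entry_formula {n : ℕ} (U V : Matrix (Fin n) (Fin n) ℝ) (d : Fin n → ℝ) (i j : Fin n) :
    (U * diagonal d * V) i j = ∑ k, U i k * d k * V k j := by
  rw [Matrix.mul_apply]
  apply Finset.sum_congr rfl
  intro k _
  rw [Matrix.mul_diagonal]

theorem stmt_2 {n : ℕ} (A : Matrix (Fin n) (Fin n) ℝ) (hA : A.PosDef) (i j : Fin n) :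
    MeasureTheory.IntegrableOn
      (fun s : ℝ => ((1 / (1 + s)) • (1 : Matrix (Fin n) (Fin n) ℝ)
        - (A + s • (1 : Matrix (Fin n) (Fin n) ℝ))⁻¹) i j) (Set.Ioi 0) ∧
    mlog A hA.1 i j =
      ∫ s in Set.Ioi (0 : ℝ),
        ((1 / (1 + s)) • (1 : Matrix (Fin n) (Fin n) ℝ)
          - (A + s • (1 : Matrix (Fin n) (Fin n) ℝ))⁻¹) i j := by
  set U : Matrix (Fin n) (Fin n) ℝ := (hA.1.eigenvectorUnitary : Matrix (Fin n) (Fin n) ℝ)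
    with hUdef
  set V : Matrix (Fin n) (Fin n) ℝ := (star hA.1.eigenvectorUnitary : Matrix (Fin n) (Fin n) ℝ)
    with hVdef
  have hUU : U * V = 1 := Matrix.mem_unitaryGroup_iff.mp hA.1.eigenvectorUnitary.2
  set lam : Fin n → ℝ := hA.1.eigenvalues with hlamdef
  -- pointwise identity on Ioi 0
  have hpt : ∀ s ∈ Ioi (0:ℝ),
      ((1 / (1 + s)) • (1 : Matrix (Fin n) (Fin n) ℝ)
        - (A + s • (1 : Matrix (Fin n) (Fin n) ℝ))⁻¹) i j
      = ∑ k, (U i k * V k j) * (1/(1+s) - (lam k + s)⁻¹) := by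
    intro s hs
    have hs0 : (0:ℝ) < s := hs
    have h1 : (1 / (1 + s)) • (1 : Matrix (Fin n) (Fin n) ℝ)
        = U * Matrix.diagonal (fun _ => 1/(1+s)) * V := by
      rw [← smul_one_eq_diagonal, Matrix.mul_smul, mul_one, Matrix.smul_mul, hUU]
    have hinv := key_decomp A hA s hs0
    rw [h1, hinv, ← Matrix.sub_mul, ← Matrix.mul_sub, Matrix.diagonal_sub, entry_formula]
    apply Finset.sum_congr rfl
    intro k _
    ring
  -- each summand integrable
  have hint : ∀ k : Fin n, IntegrableOn
      (fun s : ℝ => (U i k * V k j) * (1/(1+s) - (lam k + s)⁻¹)) (Ioi 0) :=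
    fun k => ((scalar_main (lam k) (hA.eigenvalues_pos k)).1.const_mul _)
  have hsumint : IntegrableOn
      (fun s : ℝ => ∑ k, (U i k * V k j) * (1/(1+s) - (lam k + s)⁻¹)) (Ioi 0) := by
    exact MeasureTheory.integrable_finset_sum _ (fun k _ => hint k)
  have hae : (fun s : ℝ => ((1 / (1 + s)) • (1 : Matrix (Fin n) (Fin n) ℝ)
        - (A + s • (1 : Matrix (Fin n) (Fin n) ℝ))⁻¹) i j)
      =ᵐ[volume.restrict (Ioi 0)]
      (fun s : ℝ => ∑ k, (U i k * V k j) * (1/(1+s) - (lam k + s)⁻¹)) := by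
    filter_upwards [ae_restrict_mem measurableSet_Ioi] with s hs
    exact hpt s hs
  constructor
  · exact hsumint.congr hae.symm
  · rw [MeasureTheory.integral_congr_ae hae,
      MeasureTheory.integral_finset_sum _ (fun k _ => hint k)]
    have : ∀ k : Fin n, ∫ s in Ioi (0:ℝ), (U i k * V k j) * (1/(1+s) - (lam k + s)⁻¹)
        = (U i k * V k j) * Real.log (lam k) := by
      intro k
      rw [MeasureTheory.integral_const_mul, (scalar_main (lam k) (hA.eigenvalues_pos k)).2]
    simp only [this]
    rw [show mlog A hA.1 = U * Matrix.diagonal (Real.log ∘ lam) * V from rfl, entry_formula]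
    apply Finset.sum_congr rfl
    intro k _
    simp [Function.comp]
    ring
end

section
/- Let K be an n×n symmetric positive definite matrix, σ² > 0 a scalar such that K ⪰ σ² I (i.e., K − σ² I is positive semi-definite), y, v ∈ ℝⁿ, and set r = y − K v. Then 2 rᵀ v + vᵀ K v ≤ yᵀ K⁻¹ y ≤ rᵀ r / σ² + 2 rᵀ v + vᵀ K v. -/
open Matrix

theorem stmt_5 {n : ℕ} (K : Matrix (Fin n) (Fin n) ℝ) (hK : K.PosDef)
    (σsq : ℝ) (hσ : 0 < σsq) (hKσ : (K - σsq • (1 : Matrix (Fin n) (Fin n) ℝ)).PosSemidef)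
    (y v r : Fin n → ℝ) (hr : r = y - K.mulVec v) :
    2 * (r ⬝ᵥ v) + v ⬝ᵥ K.mulVec v ≤ y ⬝ᵥ K⁻¹.mulVec y ∧
    y ⬝ᵥ K⁻¹.mulVec y ≤ r ⬝ᵥ r / σsq + 2 * (r ⬝ᵥ v) + v ⬝ᵥ K.mulVec v := by
  have hps := hK.posSemidef
  have hdet : IsUnit K.det := hK.det_pos.ne'.isUnit
  have hKinv : K * K⁻¹ = 1 := Matrix.mul_nonsing_inv K hdet
  obtain ⟨z, hz⟩ : ∃ z, z = K⁻¹.mulVec r := ⟨_, rfl⟩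
  have hKz : K.mulVec z = r := by
    rw [hz, Matrix.mulVec_mulVec, hKinv, Matrix.one_mulVec]
  have hy : y = K.mulVec v + r := by rw [hr]; abel
  have hKinvy : K⁻¹.mulVec y = v + z := by
    rw [hy, Matrix.mulVec_add, hz, Matrix.mulVec_mulVec,
      Matrix.nonsing_inv_mul K hdet, Matrix.one_mulVec]
  have hsym : Kᵀ = K := hK.isHermitian.eq
  have hswap : ∀ w x : Fin n → ℝ, (K.mulVec w) ⬝ᵥ x = w ⬝ᵥ K.mulVec x := by
    intro w x
    rw [Matrix.dotProduct_mulVec, ← hsym, Matrix.vecMul_transpose, dotProduct_comm,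
      hsym, dotProduct_comm]
  have hmain : y ⬝ᵥ K⁻¹.mulVec y = v ⬝ᵥ K.mulVec v + 2 * (r ⬝ᵥ v) + z ⬝ᵥ K.mulVec z := by
    rw [hKinvy, hy, add_dotProduct, dotProduct_add, dotProduct_add,
      hswap v z, hKz]
    have h1 : (K.mulVec v) ⬝ᵥ v = v ⬝ᵥ K.mulVec v := hswap v v
    have h2 : r ⬝ᵥ z = z ⬝ᵥ K.mulVec z := by
      rw [← hKz, hswap z z, hKz, dotProduct_comm]
    have h3 : r ⬝ᵥ v = v ⬝ᵥ r := dotProduct_comm r v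
    have h4 : z ⬝ᵥ r = r ⬝ᵥ z := dotProduct_comm z r
    linarith
  have hzKz : 0 ≤ z ⬝ᵥ K.mulVec z := by simpa using hps.dotProduct_mulVec_nonneg z
  constructor
  · rw [hmain]; linarith
  · obtain ⟨S, hS, hSS⟩ : ∃ S : Matrix (Fin n) (Fin n) ℝ, S.PosSemidef ∧ S * S = K := by
      open scoped MatrixOrder in
      exact ⟨CFC.sqrt K, (CFC.sqrt_nonneg K).posSemidef, CFC.sqrt_mul_sqrt_self K hps.nonneg⟩
    have hSsym : Sᵀ = S := hS.1.eq
    have hSswap : ∀ w x : Fin n → ℝ, (S.mulVec w) ⬝ᵥ x = w ⬝ᵥ S.mulVec x := by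
      intro w x
      rw [Matrix.dotProduct_mulVec, ← hSsym, Matrix.vecMul_transpose, dotProduct_comm,
        hSsym, dotProduct_comm]
    obtain ⟨w, hw⟩ : ∃ w, w = S.mulVec z := ⟨_, rfl⟩
    have hKzS : K.mulVec z = S.mulVec w := by
      rw [hw, Matrix.mulVec_mulVec, hSS]
    have hrr : r ⬝ᵥ r = w ⬝ᵥ K.mulVec w := by
      rw [← hKz, hKzS, hSswap w (S.mulVec w), Matrix.mulVec_mulVec, hSS]
    have hzKzw : z ⬝ᵥ K.mulVec z = w ⬝ᵥ w := by
      rw [← hSS, ← Matrix.mulVec_mulVec, ← hSswap z (S.mulVec z), ← hw, hw,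
        dotProduct_comm]
    have hkey : 0 ≤ w ⬝ᵥ K.mulVec w - σsq * (w ⬝ᵥ w) := by
      have := hKσ.dotProduct_mulVec_nonneg w
      simpa [Matrix.sub_mulVec, dotProduct_sub, Matrix.smul_mulVec,
        Matrix.one_mulVec, dotProduct_smul, smul_eq_mul] using this
    have hle : z ⬝ᵥ K.mulVec z ≤ r ⬝ᵥ r / σsq := by
      rw [hzKzw, hrr, le_div_iff₀ hσ]
      nlinarith
    rw [hmain]; linarith
end

section
/- Let K be an n×n symmetric positive definite matrix, T an n×t matrix with TᵀT = I_t, and s > 0. Then Tᵀ (K + s I_n)⁻¹ T − (TᵀKT + s I_t)⁻¹ is positive semi-definite. -/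
open Matrix

lemma stmt_14_aux {n t : ℕ} (A : Matrix (Fin n) (Fin n) ℝ) (T : Matrix (Fin n) (Fin t) ℝ)
    (C : Matrix (Fin t) (Fin t) ℝ) (hC : C = Tᵀ * A * T)
    (h1 : A⁻¹ * A = 1) (h2 : A * A⁻¹ = 1) (h3 : C⁻¹ * C = 1) :
    (A⁻¹ - T * C⁻¹ * Tᵀ) * A * (A⁻¹ - T * C⁻¹ * Tᵀ) = A⁻¹ - T * C⁻¹ * Tᵀ := by
  have e : (A⁻¹ - T * C⁻¹ * Tᵀ) * A * (A⁻¹ - T * C⁻¹ * Tᵀ)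
      = A⁻¹ * (A * A⁻¹) - (A⁻¹ * A) * (T * C⁻¹ * Tᵀ) - (T * C⁻¹ * Tᵀ) * (A * A⁻¹)
        + (T * (C⁻¹ * C)) * (C⁻¹ * Tᵀ) := by
    rw [hC]
    simp only [Matrix.sub_mul, Matrix.mul_sub, Matrix.mul_assoc]
    abel
  rw [e, h1, h2, h3, Matrix.mul_one, Matrix.one_mul, Matrix.mul_one]
  have e2 : T * (C⁻¹ * Tᵀ) = T * C⁻¹ * Tᵀ := (Matrix.mul_assoc T C⁻¹ Tᵀ).symm
  rw [Matrix.mul_one, e2]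
  abel

theorem stmt_14 {n t : ℕ} (K : Matrix (Fin n) (Fin n) ℝ) (hK : K.PosDef)
    (T : Matrix (Fin n) (Fin t) ℝ) (hT : Tᵀ * T = 1) (s : ℝ) (hs : 0 < s) :
    (Tᵀ * (K + s • (1 : Matrix (Fin n) (Fin n) ℝ))⁻¹ * T
      - (Tᵀ * K * T + s • (1 : Matrix (Fin t) (Fin t) ℝ))⁻¹).PosSemidef := by
  set A := K + s • (1 : Matrix (Fin n) (Fin n) ℝ) with hA
  have hsI : (s • (1 : Matrix (Fin n) (Fin n) ℝ)).PosDef := by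
    refine posDef_iff_dotProduct_mulVec.mpr ⟨?_, fun x hx => ?_⟩
    · simp [IsHermitian, conjTranspose_smul]
    · have h : (s • (1 : Matrix (Fin n) (Fin n) ℝ)) *ᵥ x = s • x := by
        simp [smul_mulVec]
      rw [h, dotProduct_smul]
      have hxx : 0 < star x ⬝ᵥ x := by
        simpa using (dotProduct_star_self_pos_iff (R := ℝ)).2 hx
      exact mul_pos hs hxx
  have hApd : A.PosDef := hK.add hsI
  have hAsymm : Aᵀ = A := by
    rw [← conjTranspose_eq_transpose_of_trivial, hApd.isHermitian.eq]
  have hTinj : ∀ x : Fin t → ℝ, T *ᵥ x = 0 → x = 0 := by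
    intro x hx
    have h : Tᵀ *ᵥ T *ᵥ x = x := by rw [mulVec_mulVec, hT, one_mulVec]
    rw [hx, mulVec_zero] at h
    exact h.symm
  set C := Tᵀ * A * T with hC
  have hCsymm : Cᵀ = C := by
    rw [hC, transpose_mul, transpose_mul, transpose_transpose, hAsymm, Matrix.mul_assoc]
  have hCpd : C.PosDef := by
    refine posDef_iff_dotProduct_mulVec.mpr ⟨?_, fun x hx => ?_⟩
    · rw [← conjTranspose_eq_transpose_of_trivial] at hCsymm
      exact hCsymm
    · have hTx : T *ᵥ x ≠ 0 := fun h => hx (hTinj x h)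
      have hq := hApd.dotProduct_mulVec_pos hTx
      have e0 : star x ⬝ᵥ (C *ᵥ x) = star (T *ᵥ x) ⬝ᵥ (A *ᵥ (T *ᵥ x)) := by
        rw [hC, ← mulVec_mulVec, ← mulVec_mulVec, dotProduct_mulVec, vecMul_transpose]
        simp
      rw [e0]
      exact hq
  have hAunit : IsUnit A.det := (isUnit_iff_isUnit_det A).mp hApd.isUnit
  have hCunit : IsUnit C.det := (isUnit_iff_isUnit_det C).mp hCpd.isUnit
  have h1 : A⁻¹ * A = 1 := nonsing_inv_mul A hAunit
  have h2 : A * A⁻¹ = 1 := mul_nonsing_inv A hAunit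
  have h3 : C⁻¹ * C = 1 := nonsing_inv_mul C hCunit
  set N := A⁻¹ - T * C⁻¹ * Tᵀ with hN
  have hNsymm : Nᵀ = N := by
    rw [hN, transpose_sub, transpose_mul, transpose_mul, transpose_transpose,
      transpose_nonsing_inv, hAsymm, transpose_nonsing_inv, hCsymm, Matrix.mul_assoc]
  have key : N * A * Nᵀ = N := by
    rw [hNsymm, hN]
    exact stmt_14_aux A T C hC h1 h2 h3
  have hNpsd : N.PosSemidef := by
    rw [← key, show Nᵀ = Nᴴ from (conjTranspose_eq_transpose_of_trivial N).symm]
    exact hApd.posSemidef.mul_mul_conjTranspose_same N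
  have hfinal : (Tᵀ * N * T).PosSemidef := by
    rw [show Tᵀ = Tᴴ from (conjTranspose_eq_transpose_of_trivial T).symm]
    exact hNpsd.conjTranspose_mul_mul_same T
  have hCeq : C = Tᵀ * K * T + s • (1 : Matrix (Fin t) (Fin t) ℝ) := by
    rw [hC, hA, Matrix.mul_add, Matrix.add_mul, Matrix.mul_smul, Matrix.smul_mul,
      Matrix.mul_one, hT]
  have heq : Tᵀ * N * T
      = Tᵀ * A⁻¹ * T - (Tᵀ * K * T + s • (1 : Matrix (Fin t) (Fin t) ℝ))⁻¹ := by
    rw [hN, Matrix.mul_sub, Matrix.sub_mul, ← hCeq]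
    congr 1
    rw [show Tᵀ * (T * C⁻¹ * Tᵀ) * T = (Tᵀ * T) * C⁻¹ * (Tᵀ * T) from by
      simp only [Matrix.mul_assoc], hT, Matrix.one_mul, Matrix.mul_one]
  rw [heq] at hfinal
  exact hfinal
end

section
/- Let K be an n×n symmetric positive definite matrix, T an n×t matrix with TᵀT = I_t, and s > 0. Then Tᵀ(K + sI_n)⁻¹T − (TᵀKT + sI_t)⁻¹ = (1/s) Tᵀ K^{1/2} ( (K^{1/2} T Tᵀ K^{1/2} + s I_n)⁻¹ − (K + s I_n)⁻¹ ) K^{1/2} T. -/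
open Matrix

lemma smul_one_posDef {m : ℕ} {s : ℝ} (hs : 0 < s) :
    (s • (1 : Matrix (Fin m) (Fin m) ℝ)).PosDef := by
  rw [Matrix.smul_one_eq_diagonal]
  exact Matrix.PosDef.diagonal (fun _ => hs)

lemma woodbury {m k : ℕ} (U : Matrix (Fin m) (Fin k) ℝ) (V : Matrix (Fin k) (Fin m) ℝ)
    {s : ℝ} (hs : s ≠ 0)
    (h : IsUnit (V * U + s • (1 : Matrix (Fin k) (Fin k) ℝ)).det) :
    (U * V + s • (1 : Matrix (Fin m) (Fin m) ℝ))⁻¹ =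
      s⁻¹ • (1 - U * (V * U + s • (1 : Matrix (Fin k) (Fin k) ℝ))⁻¹ * V) := by
  set A := V * U + s • (1 : Matrix (Fin k) (Fin k) ℝ) with hA
  have hAinv : A * A⁻¹ = 1 := Matrix.mul_nonsing_inv A h
  apply Matrix.inv_eq_right_inv
  have key : (U * V + s • (1 : Matrix (Fin m) (Fin m) ℝ)) * U = U * A := by
    simp [hA, Matrix.add_mul, Matrix.mul_add, Matrix.smul_mul, Matrix.mul_smul, Matrix.mul_assoc]
  calc (U * V + s • (1 : Matrix (Fin m) (Fin m) ℝ)) * (s⁻¹ • (1 - U * A⁻¹ * V))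
      = s⁻¹ • ((U * V + s • (1 : Matrix (Fin m) (Fin m) ℝ))
          - (U * V + s • (1 : Matrix (Fin m) (Fin m) ℝ)) * (U * (A⁻¹ * V))) := by
        rw [Matrix.mul_smul, Matrix.mul_sub, Matrix.mul_one, Matrix.mul_assoc]
    _ = s⁻¹ • ((U * V + s • (1 : Matrix (Fin m) (Fin m) ℝ)) - U * V) := by
        rw [← Matrix.mul_assoc, key, Matrix.mul_assoc, ← Matrix.mul_assoc A, hAinv, Matrix.one_mul]
    _ = 1 := by rw [add_sub_cancel_left, smul_smul, inv_mul_cancel₀ hs, one_smul]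

section
open scoped ComplexOrder

/-- The positive semidefinite square root of a positive semidefinite matrix, as defined in
Mathlib (Dec 2024) before its removal. -/
noncomputable def Matrix.PosSemidef.sqrt {n 𝕜 : Type*} [Fintype n] [RCLike 𝕜] [DecidableEq n]
    {A : Matrix n n 𝕜} (hA : A.PosSemidef) : Matrix n n 𝕜 :=
  hA.1.eigenvectorUnitary.1 * diagonal ((↑) ∘ (√·) ∘ hA.1.eigenvalues) *
  (star hA.1.eigenvectorUnitary : Matrix n n 𝕜)

end


namespace Matrix.PosSemidef

lemma sqrt_mul_self {n : Type*} [Fintype n] [DecidableEq n]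
    {A : Matrix n n ℝ} (hA : A.PosSemidef) : hA.sqrt * hA.sqrt = A := by
  have hU : (star hA.1.eigenvectorUnitary : Matrix n n ℝ) * hA.1.eigenvectorUnitary.1 = 1 :=
    Unitary.star_mul_self_of_mem hA.1.eigenvectorUnitary.2
  have hD : diagonal ((RCLike.ofReal : ℝ → ℝ) ∘ (√·) ∘ hA.1.eigenvalues) *
      diagonal ((RCLike.ofReal : ℝ → ℝ) ∘ (√·) ∘ hA.1.eigenvalues) =
      diagonal (RCLike.ofReal ∘ hA.1.eigenvalues) := by
    rw [diagonal_mul_diagonal]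
    congr 1
    funext i
    simp [Real.mul_self_sqrt (hA.eigenvalues_nonneg i)]
  unfold Matrix.PosSemidef.sqrt
  calc _ = hA.1.eigenvectorUnitary.1 * (diagonal ((RCLike.ofReal : ℝ → ℝ) ∘ (√·) ∘ hA.1.eigenvalues) *
      ((star hA.1.eigenvectorUnitary : Matrix n n ℝ) * hA.1.eigenvectorUnitary.1) *
      diagonal ((RCLike.ofReal : ℝ → ℝ) ∘ (√·) ∘ hA.1.eigenvalues)) *
      (star hA.1.eigenvectorUnitary : Matrix n n ℝ) := by simp only [Matrix.mul_assoc]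
    _ = A := by
      rw [hU, Matrix.mul_one, hD]
      conv_rhs => rw [hA.1.spectral_theorem]
      simp [Unitary.conjStarAlgAut_apply]

lemma posSemidef_sqrt {n : Type*} [Fintype n] [DecidableEq n]
    {A : Matrix n n ℝ} (hA : A.PosSemidef) : hA.sqrt.PosSemidef := by
  unfold Matrix.PosSemidef.sqrt
  have := (PosSemidef.diagonal (n := n) (d := (RCLike.ofReal : ℝ → ℝ) ∘ (√·) ∘ hA.1.eigenvalues)
    (fun i => by simp [Real.sqrt_nonneg])).mul_mul_conjTranspose_same hA.1.eigenvectorUnitary.1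
  exact this

end Matrix.PosSemidef

theorem stmt_15 {n t : ℕ} (K : Matrix (Fin n) (Fin n) ℝ) (hK : K.PosDef)
    (T : Matrix (Fin n) (Fin t) ℝ) (hT : Tᵀ * T = 1) (s : ℝ) (hs : 0 < s) :
    Tᵀ * (K + s • (1 : Matrix (Fin n) (Fin n) ℝ))⁻¹ * T
      - (Tᵀ * K * T + s • (1 : Matrix (Fin t) (Fin t) ℝ))⁻¹ =
    s⁻¹ • (Tᵀ * hK.posSemidef.sqrt *
      ((hK.posSemidef.sqrt * (T * Tᵀ) * hK.posSemidef.sqrt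
          + s • (1 : Matrix (Fin n) (Fin n) ℝ))⁻¹
        - (K + s • (1 : Matrix (Fin n) (Fin n) ℝ))⁻¹) * (hK.posSemidef.sqrt * T)) := by
  set R := hK.posSemidef.sqrt with hR
  have hRR : R * R = K := hK.posSemidef.sqrt_mul_self
  have hRT : Rᵀ = R := by
    have := hK.posSemidef.posSemidef_sqrt.1
    simpa [Matrix.IsHermitian, Matrix.conjTranspose_eq_transpose_of_trivial] using this
  have hdet1 : IsUnit (R * R + s • (1 : Matrix (Fin n) (Fin n) ℝ)).det := by
    rw [hRR]
    exact (hK.add_posSemidef (smul_one_posDef hs).posSemidef).det_pos.ne'.isUnit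
  have hTT : (T * Tᵀ).PosSemidef := by
    simpa using Matrix.posSemidef_self_mul_conjTranspose T
  have hmid : (R * (T * Tᵀ) * R).PosSemidef := by
    simpa [hRT] using hTT.mul_mul_conjTranspose_same R
  have hdet2 : IsUnit ((R * T) * (Tᵀ * R) + s • (1 : Matrix (Fin n) (Fin n) ℝ)).det := by
    have h2 : (R * T) * (Tᵀ * R) = R * (T * Tᵀ) * R := by
      simp only [Matrix.mul_assoc]
    rw [h2]
    exact (Matrix.PosDef.posSemidef_add hmid (smul_one_posDef hs)).det_pos.ne'.isUnit
  have W1 : (K + s • (1 : Matrix (Fin n) (Fin n) ℝ))⁻¹ =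
      s⁻¹ • (1 - R * (K + s • (1 : Matrix (Fin n) (Fin n) ℝ))⁻¹ * R) := by
    have := woodbury R R hs.ne' hdet1
    rwa [hRR] at this
  have W2 : (Tᵀ * K * T + s • (1 : Matrix (Fin t) (Fin t) ℝ))⁻¹ =
      s⁻¹ • (1 - (Tᵀ * R) * (R * (T * Tᵀ) * R + s • (1 : Matrix (Fin n) (Fin n) ℝ))⁻¹
        * (R * T)) := by
    have h1 : Tᵀ * K * T = (Tᵀ * R) * (R * T) := by
      rw [← hRR]; simp only [Matrix.mul_assoc]
    have h2 : (R * T) * (Tᵀ * R) = R * (T * Tᵀ) * R := by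
      simp only [Matrix.mul_assoc]
    rw [h1, woodbury (Tᵀ * R) (R * T) hs.ne' hdet2, h2]
  rw [W2]
  conv_lhs => rw [W1]
  simp only [Matrix.mul_smul, Matrix.smul_mul, Matrix.mul_sub, Matrix.sub_mul,
    Matrix.mul_one, Matrix.one_mul, smul_sub, Matrix.mul_assoc, hT]
  abel
end

section
/- Let K be an n×n symmetric positive definite matrix, T an n×t matrix with TᵀT = I_t, and z ∈ ℝⁿ in the column space of T. Then zᵀ log(K) z ≤ zᵀ T log(Tᵀ K T) Tᵀ z. -/
open Matrix MeasureTheory Set Filter Topology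

lemma dot_mulVec_left {m k : ℕ} (A : Matrix (Fin m) (Fin k) ℝ) (x : Fin k → ℝ) (y : Fin m → ℝ) :
    (A *ᵥ x) ⬝ᵥ y = x ⬝ᵥ (Aᵀ *ᵥ y) := by
  rw [dotProduct_comm, dotProduct_mulVec, ← mulVec_transpose, dotProduct_comm]

lemma dot_self_via {m k : ℕ} (A : Matrix (Fin m) (Fin k) ℝ) (hA : Aᵀ * A = 1) (x : Fin k → ℝ) :
    (A *ᵥ x) ⬝ᵥ (A *ᵥ x) = x ⬝ᵥ x := by
  rw [dot_mulVec_left, mulVec_mulVec, hA, one_mulVec]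

lemma dot_UDU {m : ℕ} (U : Matrix (Fin m) (Fin m) ℝ) (d : Fin m → ℝ) (x : Fin m → ℝ) :
    x ⬝ᵥ (U * diagonal d * Uᵀ) *ᵥ x = ∑ i, d i * (Uᵀ *ᵥ x) i ^ 2 := by
  rw [← mulVec_mulVec, ← mulVec_mulVec, dotProduct_mulVec, ← mulVec_transpose]
  simp only [dotProduct, mulVec_diagonal]
  exact Finset.sum_congr rfl fun i _ => by ring

lemma UDU_mul {m : ℕ} {U : Matrix (Fin m) (Fin m) ℝ} (hU : Uᵀ * U = 1) (d e : Fin m → ℝ) :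
    (U * diagonal d * Uᵀ) * (U * diagonal e * Uᵀ) = U * diagonal (fun i => d i * e i) * Uᵀ := by
  have h : diagonal d * (Uᵀ * U) * diagonal e = diagonal fun i => d i * e i := by
    rw [hU, mul_one, diagonal_mul_diagonal]
  calc (U * diagonal d * Uᵀ) * (U * diagonal e * Uᵀ)
      = U * (diagonal d * (Uᵀ * U) * diagonal e) * Uᵀ := by
        simp only [Matrix.mul_assoc]
    _ = U * diagonal (fun i => d i * e i) * Uᵀ := by rw [h]

lemma smul_one_UDU {m : ℕ} {U : Matrix (Fin m) (Fin m) ℝ} (hU : U * Uᵀ = 1) (s : ℝ) :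
    (s : ℝ) • (1 : Matrix (Fin m) (Fin m) ℝ) = U * Matrix.diagonal (fun _ => s) * Uᵀ := by
  have h1 : diagonal (fun _ : Fin m => s) = s • (1 : Matrix (Fin m) (Fin m) ℝ) := by
    ext i j
    by_cases hij : i = j <;> simp [diagonal_apply, Matrix.one_apply, hij]
  rw [h1, Matrix.mul_smul, Matrix.smul_mul, mul_one, hU]

lemma star_real {m : ℕ} (A : Matrix (Fin m) (Fin m) ℝ) : star A = Aᵀ := by
  rw [Matrix.star_eq_conjTranspose, conjTranspose_eq_transpose_of_trivial]

lemma logIntegral {c : ℝ} (hc : 0 < c) :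
    IntegrableOn (fun s : ℝ => (1+s)⁻¹ - (c+s)⁻¹) (Ioi 0) ∧
      ∫ s in Ioi (0:ℝ), ((1+s)⁻¹ - (c+s)⁻¹) = Real.log c := by
  set f : ℝ → ℝ := fun s => Real.log (1+s) - Real.log (c+s) with hf
  have hderiv : ∀ x ∈ Ici (0:ℝ), HasDerivAt f ((fun s : ℝ => (1+s)⁻¹ - (c+s)⁻¹) x) x := by
    intro x hx
    have hx' : (0:ℝ) ≤ x := hx
    have h1 : (0:ℝ) < 1 + x := by linarith
    have h2 : (0:ℝ) < c + x := by linarith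
    have d1 : HasDerivAt (fun s : ℝ => Real.log (1+s)) (1/(1+x)) x := by
      simpa using ((hasDerivAt_id x).const_add 1).log (ne_of_gt h1)
    have d2 : HasDerivAt (fun s : ℝ => Real.log (c+s)) (1/(c+x)) x := by
      simpa using ((hasDerivAt_id x).const_add c).log (ne_of_gt h2)
    have hd := d1.sub d2
    rw [one_div, one_div] at hd
    exact hd
  have htend : Tendsto f atTop (𝓝 0) := by
    have h2 : Tendsto (fun s : ℝ => (1-c)/(c+s)) atTop (𝓝 0) :=
      Tendsto.div_atTop tendsto_const_nhds (tendsto_atTop_add_const_left _ c tendsto_id)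
    have h1 : Tendsto (fun s : ℝ => (1+s)/(c+s)) atTop (𝓝 1) := by
      have heq : (fun s : ℝ => 1 + (1-c)/(c+s)) =ᶠ[atTop] fun s : ℝ => (1+s)/(c+s) := by
        filter_upwards [eventually_gt_atTop 0] with s hs
        have : c + s ≠ 0 := by positivity
        field_simp
        ring
      simpa using (h2.const_add 1).congr' heq
    have hlog : Tendsto (fun s : ℝ => Real.log ((1+s)/(c+s))) atTop (𝓝 (Real.log 1)) :=
      ((Real.continuousAt_log one_ne_zero).tendsto).comp h1
    rw [Real.log_one] at hlog
    apply hlog.congr'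
    filter_upwards [eventually_gt_atTop 0] with s hs
    rw [Real.log_div (by positivity) (by positivity)]
  have hf0 : f 0 = - Real.log c := by simp [hf]
  rcases le_total 1 c with hc1 | hc1
  · have gpos : ∀ x ∈ Ioi (0:ℝ), 0 ≤ (fun s : ℝ => (1+s)⁻¹ - (c+s)⁻¹) x := by
      intro x hx
      simp only [sub_nonneg]
      exact inv_anti₀ (by linarith [mem_Ioi.mp hx]) (by linarith)
    refine ⟨integrableOn_Ioi_deriv_of_nonneg' hderiv gpos htend, ?_⟩
    rw [integral_Ioi_of_hasDerivAt_of_nonneg' hderiv gpos htend, hf0]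
    ring
  · have gneg : ∀ x ∈ Ioi (0:ℝ), (fun s : ℝ => (1+s)⁻¹ - (c+s)⁻¹) x ≤ 0 := by
      intro x hx
      simp only [sub_nonpos]
      exact inv_anti₀ (by linarith [mem_Ioi.mp hx]) (by linarith)
    refine ⟨integrableOn_Ioi_deriv_of_nonpos' hderiv gneg htend, ?_⟩
    rw [integral_Ioi_of_hasDerivAt_of_nonpos' hderiv gneg htend, hf0]
    ring


lemma sum_log_le {n t : ℕ} (lam : Fin n → ℝ) (mu : Fin t → ℝ) (a : Fin n → ℝ) (b : Fin t → ℝ)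
    (hlam : ∀ i, 0 < lam i) (hmu : ∀ j, 0 < mu j)
    (hsum : ∑ i, a i = ∑ j, b j)
    (hres : ∀ s : ℝ, 0 < s → ∑ j, (mu j + s)⁻¹ * b j ≤ ∑ i, (lam i + s)⁻¹ * a i) :
    ∑ i, Real.log (lam i) * a i ≤ ∑ j, Real.log (mu j) * b j := by
  set F : ℝ → ℝ := fun s => ∑ i, a i * ((1+s)⁻¹ - (lam i + s)⁻¹) with hF
  set G : ℝ → ℝ := fun s => ∑ j, b j * ((1+s)⁻¹ - (mu j + s)⁻¹) with hG
  have hFi : ∀ i : Fin n, Integrable (fun s : ℝ => a i * ((1+s)⁻¹ - (lam i + s)⁻¹))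
      (volume.restrict (Ioi 0)) := fun i => (logIntegral (hlam i)).1.const_mul (a i)
  have hGi : ∀ j : Fin t, Integrable (fun s : ℝ => b j * ((1+s)⁻¹ - (mu j + s)⁻¹))
      (volume.restrict (Ioi 0)) := fun j => (logIntegral (hmu j)).1.const_mul (b j)
  have hFint : IntegrableOn F (Ioi 0) := by
    apply integrable_finset_sum _ (fun i _ => hFi i)
  have hGint : IntegrableOn G (Ioi 0) := by
    apply integrable_finset_sum _ (fun j _ => hGi j)
  have hFval : ∫ s in Ioi (0:ℝ), F s = ∑ i, Real.log (lam i) * a i := by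
    rw [hF, integral_finset_sum _ (fun i _ => hFi i)]
    refine Finset.sum_congr rfl fun i _ => ?_
    rw [integral_const_mul, (logIntegral (hlam i)).2, mul_comm]
  have hGval : ∫ s in Ioi (0:ℝ), G s = ∑ j, Real.log (mu j) * b j := by
    rw [hG, integral_finset_sum _ (fun j _ => hGi j)]
    refine Finset.sum_congr rfl fun j _ => ?_
    rw [integral_const_mul, (logIntegral (hmu j)).2, mul_comm]
  have hpt : ∀ s ∈ Ioi (0:ℝ), F s ≤ G s := by
    intro s hs
    have h1 : F s = (∑ i, a i) * (1+s)⁻¹ - ∑ i, (lam i + s)⁻¹ * a i := by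
      rw [hF]
      simp only [mul_sub, Finset.sum_sub_distrib, ← Finset.sum_mul]
      congr 1
      exact Finset.sum_congr rfl fun i _ => mul_comm _ _
    have h2 : G s = (∑ j, b j) * (1+s)⁻¹ - ∑ j, (mu j + s)⁻¹ * b j := by
      rw [hG]
      simp only [mul_sub, Finset.sum_sub_distrib, ← Finset.sum_mul]
      congr 1
      exact Finset.sum_congr rfl fun j _ => mul_comm _ _
    rw [h1, h2, hsum]
    have := hres s (mem_Ioi.mp hs)
    linarith
  rw [← hFval, ← hGval]
  exact setIntegral_mono_on hFint hGint measurableSet_Ioi hpt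

lemma key_cs {n t : ℕ} (B S P : Matrix (Fin n) (Fin n) ℝ) (T : Matrix (Fin n) (Fin t) ℝ)
    (hT : Tᵀ * T = 1) (Q : Matrix (Fin t) (Fin t) ℝ)
    (hS : S * S = B) (hSs : Sᵀ = S)
    (hP : B * P = 1)
    (hQ : (Tᵀ * B * T) * Q = 1)
    (w : Fin t → ℝ) :
    w ⬝ᵥ Q *ᵥ w ≤ (T *ᵥ w) ⬝ᵥ P *ᵥ (T *ᵥ w) := by
  set z : Fin n → ℝ := T *ᵥ w with hz
  set u : Fin n → ℝ := T *ᵥ (Q *ᵥ w) with hu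
  set v : Fin n → ℝ := P *ᵥ z with hv
  set c : ℝ := w ⬝ᵥ Q *ᵥ w with hc
  set e : ℝ := z ⬝ᵥ P *ᵥ z with he
  have hTz : Tᵀ *ᵥ z = w := by rw [hz, mulVec_mulVec, hT, one_mulVec]
  have hBv : B *ᵥ v = z := by rw [hv, mulVec_mulVec, hP, one_mulVec]
  have hdotB : ∀ x y : Fin n → ℝ, x ⬝ᵥ B *ᵥ y = (S *ᵥ x) ⬝ᵥ (S *ᵥ y) := by
    intro x y
    rw [← hS, ← mulVec_mulVec, dot_mulVec_left, hSs]
  have h1 : u ⬝ᵥ B *ᵥ v = c := by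
    rw [hBv, hu, dot_mulVec_left, hTz, dotProduct_comm]
  have h2 : u ⬝ᵥ B *ᵥ u = c := by
    rw [hu]
    rw [dot_mulVec_left]
    rw [mulVec_mulVec, mulVec_mulVec, mulVec_mulVec, hQ, one_mulVec, dotProduct_comm]
  have h3 : v ⬝ᵥ B *ᵥ v = e := by rw [hBv, dotProduct_comm, he]
  have hcnn : 0 ≤ c := by
    rw [← h2, hdotB]
    exact Finset.sum_nonneg fun i _ => mul_self_nonneg _
  have henn : 0 ≤ e := by
    rw [← h3, hdotB]
    exact Finset.sum_nonneg fun i _ => mul_self_nonneg _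
  have hcs : c ^ 2 ≤ c * e := by
    have := Finset.sum_mul_sq_le_sq_mul_sq Finset.univ (S *ᵥ u) (S *ᵥ v)
    calc c ^ 2 = (u ⬝ᵥ B *ᵥ v) ^ 2 := by rw [h1]
      _ = (∑ i, (S *ᵥ u) i * (S *ᵥ v) i) ^ 2 := by rw [hdotB]; rfl
      _ ≤ (∑ i, (S *ᵥ u) i ^ 2) * ∑ i, (S *ᵥ v) i ^ 2 := this
      _ = (u ⬝ᵥ B *ᵥ u) * (v ⬝ᵥ B *ᵥ v) := by
          rw [hdotB u u, hdotB v v]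
          simp [dotProduct, sq]
      _ = c * e := by rw [h2, h3]
  rcases eq_or_lt_of_le hcnn with hc0 | hc0
  · rw [← hc0] at *; exact henn
  · nlinarith

lemma mlog_eq {n : ℕ} (A : Matrix (Fin n) (Fin n) ℝ) (hA : A.IsHermitian) :
    mlog A hA = (hA.eigenvectorUnitary : Matrix (Fin n) (Fin n) ℝ) *
      Matrix.diagonal (fun i => Real.log (hA.eigenvalues i)) *
      (hA.eigenvectorUnitary : Matrix (Fin n) (Fin n) ℝ)ᵀ := by
  rw [mlog]
  congr 1

lemma spectral_real {n : ℕ} (A : Matrix (Fin n) (Fin n) ℝ) (hA : A.IsHermitian) :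
    A = (hA.eigenvectorUnitary : Matrix (Fin n) (Fin n) ℝ) *
      Matrix.diagonal hA.eigenvalues *
      (hA.eigenvectorUnitary : Matrix (Fin n) (Fin n) ℝ)ᵀ := by
  have := hA.spectral_theorem
  rw [RCLike.ofReal_real_eq_id] at this
  simpa [star_real] using this

theorem stmt_19 {n t : ℕ} (K : Matrix (Fin n) (Fin n) ℝ) (hK : K.PosDef)
    (T : Matrix (Fin n) (Fin t) ℝ) (hT : Tᵀ * T = 1)
    (h : (Tᵀ * K * T).IsHermitian)
    (z : Fin n → ℝ) (hz : ∃ w, z = T.mulVec w) :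
    z ⬝ᵥ (mlog K hK.1).mulVec z ≤ z ⬝ᵥ (T * mlog (Tᵀ * K * T) h * Tᵀ).mulVec z := by
  obtain ⟨w, rfl⟩ := hz
  set z : Fin n → ℝ := T.mulVec w with hzdef
  set U : Matrix (Fin n) (Fin n) ℝ := (hK.1.eigenvectorUnitary : Matrix (Fin n) (Fin n) ℝ)
    with hUdef
  set V : Matrix (Fin t) (Fin t) ℝ := (h.eigenvectorUnitary : Matrix (Fin t) (Fin t) ℝ)
    with hVdef
  set lam : Fin n → ℝ := hK.1.eigenvalues with hlamdef
  set mu : Fin t → ℝ := h.eigenvalues with hmudef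
  -- unitarity
  have hUo' : U * Uᵀ = 1 := by
    have := Matrix.mem_unitaryGroup_iff.mp hK.1.eigenvectorUnitary.2
    rwa [star_real] at this
  have hUo : Uᵀ * U = 1 := by
    have := Matrix.mem_unitaryGroup_iff'.mp hK.1.eigenvectorUnitary.2
    rwa [star_real] at this
  have hVo' : V * Vᵀ = 1 := by
    have := Matrix.mem_unitaryGroup_iff.mp h.eigenvectorUnitary.2
    rwa [star_real] at this
  have hVo : Vᵀ * V = 1 := by
    have := Matrix.mem_unitaryGroup_iff'.mp h.eigenvectorUnitary.2
    rwa [star_real] at this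
  -- spectra
  have hKspec : K = U * diagonal lam * Uᵀ := spectral_real K hK.1
  have hMspec : Tᵀ * K * T = V * diagonal mu * Vᵀ := spectral_real _ h
  have hlampos : ∀ i, 0 < lam i := fun i => hK.eigenvalues_pos i
  -- M posdef
  have hMpd : (Tᵀ * K * T).PosDef := by
    refine Matrix.PosDef.of_dotProduct_mulVec_pos h fun x hx => ?_
    have hTx : T *ᵥ x ≠ 0 := by
      intro h0
      apply hx
      have hx' : Tᵀ *ᵥ (T *ᵥ x) = x := by rw [mulVec_mulVec, hT, one_mulVec]
      rw [h0, mulVec_zero] at hx'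
      exact hx'.symm
    have := hK.dotProduct_mulVec_pos hTx
    have heq : star x ⬝ᵥ (Tᵀ * K * T) *ᵥ x = star (T *ᵥ x) ⬝ᵥ K *ᵥ (T *ᵥ x) := by
      simp only [star_trivial]
      rw [← mulVec_mulVec, ← mulVec_mulVec, ← dot_mulVec_left]
    rw [heq]
    exact this
  have hmupos : ∀ j, 0 < mu j := fun j => hMpd.eigenvalues_pos j
  -- coordinates
  set a : Fin n → ℝ := fun i => (Uᵀ *ᵥ z) i ^ 2 with hadef
  set b : Fin t → ℝ := fun j => (Vᵀ *ᵥ w) j ^ 2 with hbdef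
  have hTz : Tᵀ *ᵥ z = w := by rw [hzdef, mulVec_mulVec, hT, one_mulVec]
  -- LHS
  have hLHS : z ⬝ᵥ (mlog K hK.1) *ᵥ z = ∑ i, Real.log (lam i) * a i := by
    rw [mlog_eq, dot_UDU]
  -- RHS
  have hRHS : z ⬝ᵥ (T * mlog (Tᵀ * K * T) h * Tᵀ) *ᵥ z = ∑ j, Real.log (mu j) * b j := by
    have : (T * mlog (Tᵀ * K * T) h * Tᵀ) *ᵥ z = T *ᵥ ((mlog (Tᵀ * K * T) h) *ᵥ w) := by
      rw [← hTz]
      simp only [← mulVec_mulVec]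
    rw [this, dotProduct_comm, dot_mulVec_left, hTz, dotProduct_comm, mlog_eq, dot_UDU]
  rw [hLHS, hRHS]
  -- sums of coordinates agree
  have hsum : ∑ i, a i = ∑ j, b j := by
    have h1 : ∑ i, a i = (Uᵀ *ᵥ z) ⬝ᵥ (Uᵀ *ᵥ z) := by
      simp [hadef, dotProduct, sq]
    have h2 : ∑ j, b j = (Vᵀ *ᵥ w) ⬝ᵥ (Vᵀ *ᵥ w) := by
      simp [hbdef, dotProduct, sq]
    rw [h1, h2, dot_self_via Uᵀ (by rwa [transpose_transpose]) z,
      dot_self_via Vᵀ (by rwa [transpose_transpose]) w, hzdef, dot_self_via T hT w]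
  -- resolvent inequality
  have hres : ∀ s : ℝ, 0 < s → ∑ j, (mu j + s)⁻¹ * b j ≤ ∑ i, (lam i + s)⁻¹ * a i := by
    intro s hs
    set B : Matrix (Fin n) (Fin n) ℝ := U * diagonal (fun i => lam i + s) * Uᵀ with hBdef
    set S : Matrix (Fin n) (Fin n) ℝ := U * diagonal (fun i => Real.sqrt (lam i + s)) * Uᵀ
      with hSdef
    set P : Matrix (Fin n) (Fin n) ℝ := U * diagonal (fun i => (lam i + s)⁻¹) * Uᵀ with hPdef
    set Q : Matrix (Fin t) (Fin t) ℝ := V * diagonal (fun j => (mu j + s)⁻¹) * Vᵀ with hQdef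
    have hBK : B = K + s • 1 := by
      rw [hBdef, hKspec, smul_one_UDU hUo' s]
      rw [← Matrix.add_mul, ← Matrix.mul_add, diagonal_add]
    have hSS : S * S = B := by
      rw [hSdef, hBdef, UDU_mul hUo]
      have hsq : (fun i => Real.sqrt (lam i + s) * Real.sqrt (lam i + s))
          = fun i => lam i + s := by
        funext i
        exact Real.mul_self_sqrt (add_pos (hlampos i) hs).le
      rw [hsq]
    have hSsym : Sᵀ = S := by
      rw [hSdef]
      simp [Matrix.transpose_mul, diagonal_transpose, Matrix.mul_assoc]
    have hBP : B * P = 1 := by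
      rw [hBdef, hPdef, UDU_mul hUo]
      have : (fun i => (lam i + s) * (lam i + s)⁻¹) = fun _ => (1:ℝ) := by
        ext i
        exact mul_inv_cancel₀ (add_pos (hlampos i) hs).ne'
      rw [this, diagonal_one, mul_one, hUo']
    have hNQ : (Tᵀ * B * T) * Q = 1 := by
      have hN : Tᵀ * B * T = V * diagonal (fun j => mu j + s) * Vᵀ := by
        rw [hBK, Matrix.mul_add, Matrix.add_mul, Matrix.mul_smul, Matrix.smul_mul, Matrix.mul_one, hT,
          hMspec, smul_one_UDU hVo' s, ← Matrix.add_mul, ← Matrix.mul_add, diagonal_add]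
      rw [hN, hQdef, UDU_mul hVo]
      have : (fun j => (mu j + s) * (mu j + s)⁻¹) = fun _ => (1:ℝ) := by
        ext j
        exact mul_inv_cancel₀ (add_pos (hmupos j) hs).ne'
      rw [this, diagonal_one, mul_one, hVo']
    have := key_cs B S P T hT Q hSS hSsym hBP hNQ w
    rw [hQdef, dot_UDU, hPdef, ← hzdef, dot_UDU] at this
    exact this
  exact sum_log_le lam mu a b hlampos hmupos hsum hres
end
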